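/- arXiv:1712.03680 — 8 statements merged into one kernel-verified Lean document; each statement's English description precedes it below -/
import Mathlib

section
/- The set E = {(f, U) : f ∈ U} ⊆ (ℕ → ℕ) × Opens(ℕ → ℕ) is not a member of the Borel σ-algebra generated by the product topology on (ℕ → ℕ) × Opens(ℕ → ℕ), where ℕ → ℕ carries the Baire space topology and Opens(ℕ → ℕ) carries the Scott topology. -/
open Topology TopologicalSpace MeasureTheory

namespace NotBorelAux

abbrev X := ℕ → ℕ
abbrev Sig := Topology.WithScott (Opens X)

/-- The complement of a point, as an open set. -/
def coPt (x : X) : Opens X := ⟨{x}ᶜ, isOpen_compl_singleton⟩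

def V (x : X) : Sig := Topology.WithScott.toScott (coPt x)

lemma mem_coPt {x y : X} : y ∈ coPt x ↔ y ≠ x := Iff.rfl

/-- Key lemma: a Scott-open family containing `⊤` contains all co-points with large n-th
coordinate. -/
lemma key {W : Set Sig} (hW : IsOpen W)
    (hT : Topology.WithScott.toScott (⊤ : Opens X) ∈ W) (n : ℕ) :
    ∃ m : ℕ, ∀ x : X, m ≤ x n → V x ∈ W := by
  obtain ⟨hup, hdir⟩ :=
    (Topology.IsScott.isOpen_iff_isUpperSet_and_dirSupInaccOn (D := Set.univ)).mp hW
  set g : ℕ → Sig := fun m =>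
    Topology.WithScott.toScott
      ⟨{x : X | x n < m}, by exact IsOpen.preimage (continuous_apply (A := fun _ : ℕ => ℕ) n) (isOpen_discrete {k : ℕ | k < m})⟩ with hg
  have hmono : Monotone g := by
    intro a b hab
    show ({x : X | x n < a} : Set X) ⊆ {x : X | x n < b}
    exact fun x hx => lt_of_lt_of_le hx hab
  have hlub : IsLUB (Set.range g) (Topology.WithScott.toScott (⊤ : Opens X)) := by
    constructor
    · rintro b ⟨m, rfl⟩
      exact le_top (a := (⟨{x : X | x n < m}, _⟩ : Opens X))
    · intro b hb
      show (⊤ : Opens X) ≤ Topology.WithScott.ofScott b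
      intro x _
      have h1 := hb (Set.mem_range_self (x n + 1))
      exact h1 (Nat.lt_succ_self (x n))
  obtain ⟨b, hbr, hbW⟩ := hdir (Set.mem_univ _) ⟨g 0, Set.mem_range_self 0⟩
    (directedOn_range.mpr hmono.directed_le) hlub hT
  obtain ⟨m, rfl⟩ := hbr
  refine ⟨m, fun x hx => hup ?_ hbW⟩
  show ({y : X | y n < m} : Set X) ⊆ ({x}ᶜ : Set X)
  intro y hy hyx
  rw [Set.mem_singleton_iff] at hyx
  subst hyx
  exact absurd hx (not_le_of_gt hy)

lemma top_mem_of_mem {W : Set Sig} (hW : IsOpen W) {x : X} (hx : V x ∈ W) :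
    Topology.WithScott.toScott (⊤ : Opens X) ∈ W :=
  (Topology.IsScott.isUpperSet_of_isOpen (D := Set.univ) hW) (le_top (a := coPt x)) hx

/-- Smallness: contained in a countable union of boxes. -/
def Small (S : Set X) : Prop := ∃ H : ℕ → ℕ → ℕ, ∀ x ∈ S, ∃ i, ∀ n, x n < H i n

lemma Small.iUnion {S : ℕ → Set X} (h : ∀ k, Small (S k)) : Small (⋃ k, S k) := by
  choose H hH using h
  refine ⟨fun j => H (Nat.unpair j).1 (Nat.unpair j).2, fun x hx => ?_⟩
  obtain ⟨k, hk⟩ := Set.mem_iUnion.mp hx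
  obtain ⟨i, hi⟩ := hH k x hk
  exact ⟨Nat.pair k i, by simpa [Nat.unpair_pair] using hi⟩

lemma exists_escape (H : ℕ → ℕ → ℕ) :
    ∃ x y : X, x ≠ y ∧ (∀ i, ∃ n, H i n ≤ x n) ∧ (∀ i, ∃ n, H i n ≤ y n) := by
  refine ⟨fun n => (Finset.range (n + 1)).sup (fun i => H i n),
    fun n => (Finset.range (n + 1)).sup (fun i => H i n) + 1, ?_, ?_, ?_⟩
  · intro hxy
    have := congrFun hxy 0
    omega
  · intro i
    refine ⟨i, ?_⟩
    simpa using Finset.le_sup (f := fun j => H j i) (Finset.mem_range.mpr (Nat.lt_succ_self i))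
  · intro i
    refine ⟨i, le_trans ?_ (Nat.le_succ _)⟩
    simpa using Finset.le_sup (f := fun j => H j i) (Finset.mem_range.mpr (Nat.lt_succ_self i))

/-- A set of the product is good if, outside a small set of parameters, it cannot
distinguish co-point opens. -/
def Good (B : Set (X × Sig)) : Prop :=
  ∃ S : Set X, Small S ∧ ∀ x y : X, x ∉ S → y ∉ S → ∀ f : X,
    ((f, V x) ∈ B ↔ (f, V y) ∈ B)

lemma good_empty : Good ∅ :=
  ⟨∅, ⟨fun _ _ => 0, by simp⟩, fun _ _ _ _ _ => Iff.rfl⟩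

lemma good_compl {B : Set (X × Sig)} (h : Good B) : Good Bᶜ := by
  obtain ⟨S, hS, hb⟩ := h
  exact ⟨S, hS, fun x y hx hy f => not_congr (hb x y hx hy f)⟩

lemma good_iUnion {B : ℕ → Set (X × Sig)} (h : ∀ k, Good (B k)) : Good (⋃ k, B k) := by
  choose S hS hb using h
  refine ⟨⋃ k, S k, Small.iUnion hS, fun x y hx hy f => ?_⟩
  simp only [Set.mem_iUnion]
  constructor
  · rintro ⟨k, hk⟩
    exact ⟨k, (hb k x y (fun hc => hx (Set.mem_iUnion.mpr ⟨k, hc⟩))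
      (fun hc => hy (Set.mem_iUnion.mpr ⟨k, hc⟩)) f).mp hk⟩
  · rintro ⟨k, hk⟩
    exact ⟨k, (hb k x y (fun hc => hx (Set.mem_iUnion.mpr ⟨k, hc⟩))
      (fun hc => hy (Set.mem_iUnion.mpr ⟨k, hc⟩)) f).mpr hk⟩

/-- cylinder associated to a list -/
def cylL (L : List ℕ) : Set X := PiNat.cylinder (fun i => L.getD i 0) L.length

lemma cylL_ofFn (f : X) (n : ℕ) :
    cylL (List.ofFn (fun i : Fin n => f i)) = PiNat.cylinder f n := by
  ext y
  simp only [cylL, PiNat.cylinder, Set.mem_setOf_eq, List.length_ofFn]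
  refine forall_congr' fun i => imp_congr_right fun hi => ?_
  rw [List.getD_eq_getElem?_getD, List.getElem?_ofFn]
  simp [List.ofFnNthVal, hi]

end NotBorelAux

open NotBorelAux

/-- The set `E = {(f, U) : f ∈ U} ⊆ (ℕ → ℕ) × Opens(ℕ → ℕ)` is not Borel for the
product of the Baire topology and the Scott topology on the lattice of opens. -/
theorem stmt0 :
    ¬ MeasurableSet[borel ((ℕ → ℕ) × Topology.WithScott (Opens (ℕ → ℕ)))]
      {p : (ℕ → ℕ) × Topology.WithScott (Opens (ℕ → ℕ)) |
        p.1 ∈ Topology.WithScott.ofScott p.2} := by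
  classical
  intro hE
  -- the σ-algebra of good sets
  set m : MeasurableSpace (X × Sig) :=
    { MeasurableSet' := Good
      measurableSet_empty := good_empty
      measurableSet_compl := fun _ h => good_compl h
      measurableSet_iUnion := fun _ h => good_iUnion h } with hm
  -- every open set is good
  have hopen : ∀ O : Set (X × Sig), IsOpen O → Good O := by
    intro O hO
    -- Scott-open fibers over cylinders
    set WL : List ℕ → Set Sig := fun L =>
      ⋃₀ {V' : Set Sig | IsOpen V' ∧ cylL L ×ˢ V' ⊆ O} with hWL
    have hWLopen : ∀ L, IsOpen (WL L) := fun L => isOpen_sUnion (fun _ h => h.1)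
    have hWLsub : ∀ L, cylL L ×ˢ WL L ⊆ O := by
      rintro L ⟨f, U⟩ ⟨hf, V', ⟨_, hVsub⟩, hU⟩
      exact hVsub ⟨hf, hU⟩
    have hchar : ∀ (f : X) (U : Sig), (f, U) ∈ O ↔ ∃ L, f ∈ cylL L ∧ U ∈ WL L := by
      intro f U
      constructor
      · intro hfU
        obtain ⟨u, v, hu, hv, hfu, hUv, huv⟩ := isOpen_prod_iff.mp hO f U hfU
        obtain ⟨c, ⟨x, nn, rfl⟩, hfc, hcu⟩ :=
          (PiNat.isTopologicalBasis_cylinders (fun _ : ℕ => ℕ)).exists_subset_of_mem_open hfu hu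
        refine ⟨List.ofFn (fun i : Fin nn => f i), ?_, ?_⟩
        · rw [cylL_ofFn]
          exact PiNat.self_mem_cylinder f nn
        · refine Set.mem_sUnion.mpr ⟨v, ⟨hv, ?_⟩, hUv⟩
          have hcyl : cylL (List.ofFn (fun i : Fin nn => f i)) ⊆ u := by
            rw [cylL_ofFn]
            refine subset_trans ?_ hcu
            intro y hy
            intro i hi
            rw [hy i hi]
            exact hfc i hi
          exact subset_trans (Set.prod_mono hcyl (subset_refl v)) huv
      · rintro ⟨L, hfL, hUL⟩
        exact hWLsub L ⟨hfL, hUL⟩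
    -- bounds for each L
    have hbound : ∀ L : List ℕ, ∃ h : ℕ → ℕ,
        (Topology.WithScott.toScott (⊤ : Opens X) ∈ WL L) →
          ∀ x : X, (∃ n, h n ≤ x n) → V x ∈ WL L := by
      intro L
      by_cases hT : Topology.WithScott.toScott (⊤ : Opens X) ∈ WL L
      · choose h hh using fun n => key (hWLopen L) hT n
        exact ⟨h, fun _ x ⟨n, hn⟩ => hh n x hn⟩
      · exact ⟨fun _ => 0, fun hc => absurd hc hT⟩
    choose hL hhL using hbound
    -- the small exceptional set
    refine ⟨{x : X | ∃ L : List ℕ, Topology.WithScott.toScott (⊤ : Opens X) ∈ WL L ∧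
        ∀ n, x n < hL L n}, ?_, ?_⟩
    · refine ⟨fun j => match (Encodable.decode (α := List ℕ) j) with
        | some L => hL L
        | none => fun _ => 0, fun x hx => ?_⟩
      obtain ⟨L, _, hb⟩ := hx
      refine ⟨Encodable.encode L, ?_⟩
      simp only [Encodable.encodek]
      exact hb
    · intro x y hx hy f
      rw [hchar, hchar]
      have hiff : ∀ L : List ℕ, V x ∈ WL L ↔ V y ∈ WL L := by
        intro L
        by_cases hT : Topology.WithScott.toScott (⊤ : Opens X) ∈ WL L
        · have hx' : ∃ n, hL L n ≤ x n := by
            by_contra hc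
            push_neg at hc
            exact hx ⟨L, hT, hc⟩
          have hy' : ∃ n, hL L n ≤ y n := by
            by_contra hc
            push_neg at hc
            exact hy ⟨L, hT, hc⟩
          exact iff_of_true (hhL L hT x hx') (hhL L hT y hy')
        · constructor
          · intro hc
            exact absurd (top_mem_of_mem (hWLopen L) hc) hT
          · intro hc
            exact absurd (top_mem_of_mem (hWLopen L) hc) hT
      constructor
      · rintro ⟨L, hfL, hUL⟩
        exact ⟨L, hfL, (hiff L).mp hUL⟩
      · rintro ⟨L, hfL, hUL⟩
        exact ⟨L, hfL, (hiff L).mpr hUL⟩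
  -- hence every Borel set is good
  have hle : borel (X × Sig) ≤ m := by
    rw [borel]
    exact MeasurableSpace.generateFrom_le (fun s hs => hopen s hs)
  have hEgood : Good {p : X × Sig | p.1 ∈ Topology.WithScott.ofScott p.2} := hle _ hE
  -- contradiction
  obtain ⟨S, ⟨H, hH⟩, hb⟩ := hEgood
  obtain ⟨x, y, hxy, hxesc, hyesc⟩ := exists_escape H
  have hxS : x ∉ S := by
    intro hc
    obtain ⟨i, hi⟩ := hH x hc
    obtain ⟨n, hn⟩ := hxesc i
    exact absurd hn (not_le_of_gt (hi n))
  have hyS : y ∉ S := by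
    intro hc
    obtain ⟨i, hi⟩ := hH y hc
    obtain ⟨n, hn⟩ := hyesc i
    exact absurd hn (not_le_of_gt (hi n))
  have := (hb x y hxS hyS x).mpr
  have hxVy : (x, V y) ∈ {p : X × Sig | p.1 ∈ Topology.WithScott.ofScott p.2} := by
    show x ∈ coPt y
    exact hxy
  have hxVx := this hxVy
  exact (hxVx : x ∈ coPt x) rfl
end

section
/- For every set A in the Borel σ-algebra generated by the product topology on (ℕ → ℕ) × Opens(ℕ → ℕ) (Baire topology on the first factor, Scott topology on the second), there exists a dense Gδ subset G of the Baire space such that for every f ∈ G: (f, (ℕ → ℕ) \ {f}) ∈ A if and only if (f, ℕ → ℕ) ∈ A. Here (ℕ → ℕ) \ {f} and ℕ → ℕ are regarded as elements of Opens(ℕ → ℕ), the former being open since the Baire space is T1. -/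
/-!
For an open `A`, the set `Φ` of those `f` with `(f, {f}ᶜ) ∈ A` is open: `{f}ᶜ` is the directed
union of the complements of the closed neighbourhoods of `f`, and Scott-open sets are inaccessible
by directed unions. It is dense in the set `Ψ` of those `f` with `(f, ⊤) ∈ A`: a Scott-open family
containing `⊤` contains some `{y}ᶜ` with `y` in any prescribed closed non-compact set, and Baire
space has no compact neighbourhoods. As `Φ ⊆ Ψ ⊆ closure Φ`, the two sets agree off the nowhere
dense frontier of `Φ`, and the sets `A` for which they agree on a comeagre set form a σ-algebra.
-/

open Topology TopologicalSpace MeasureTheory Set Filter Topology.WithScott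

theorem Filter.eventually_mem_iff_mem_of_measurableSet_generateFrom {X Y : Type*}
    {l : Filter X} [CountableInterFilter l] {p q : X → Y} {S : Set (Set Y)}
    (hS : ∀ t ∈ S, ∀ᶠ x in l, p x ∈ t ↔ q x ∈ t) {A : Set Y}
    (hA : MeasurableSet[MeasurableSpace.generateFrom S] A) :
    ∀ᶠ x in l, p x ∈ A ↔ q x ∈ A := by
  induction A, hA using MeasurableSpace.generateFrom_induction with
  | hC t ht _ => exact hS t ht
  | empty => simp
  | compl t _ ih => exact ih.mono fun x hx => not_congr hx
  | iUnion s _ ih =>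
    filter_upwards [eventually_countable_forall.mpr ih] with x hx
    simp only [mem_iUnion]
    exact exists_congr hx

theorem eventually_residual_mem_iff_mem {X : Type*} [TopologicalSpace X] {S T : Set X}
    (hS : IsOpen S) (hST : S ⊆ T) (hTS : T ⊆ closure S) :
    ∀ᶠ x in residual X, x ∈ S ↔ x ∈ T := by
  have hdense : Dense (frontier S)ᶜ := by
    rw [← interior_eq_empty_iff_dense_compl, ← frontier_compl]
    exact interior_frontier hS.isClosed_compl
  filter_upwards [residual_of_dense_open isClosed_frontier.isOpen_compl hdense] with x hx
  refine ⟨(hST ·), fun hxT => ?_⟩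
  by_contra hxS
  exact hx ⟨hTS hxT, by rwa [hS.interior_eq]⟩

section Scott

variable {α : Type*} {v : Set (WithScott α)}

theorem IsOpen.toScott_mem_of_le [Preorder α] (hv : IsOpen v) {a b : α} (hab : a ≤ b)
    (ha : toScott a ∈ v) : toScott b ∈ v :=
  Topology.IsScott.isUpperSet_of_isOpen (D := univ) hv hab ha

theorem IsOpen.exists_toScott_mem_of_iSup_mem [CompleteLattice α] (hv : IsOpen v)
    {ι : Type*} [Nonempty ι] {u : ι → α} (hu : Directed (· ≤ ·) u) (h : toScott (⨆ i, u i) ∈ v) :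
    ∃ i, toScott (u i) ∈ v := by
  obtain ⟨-, ⟨i, rfl⟩, hi⟩ :=
    (Topology.IsScott.isOpen_iff_isUpperSet_and_dirSupInaccOn (D := univ)).mp hv |>.2
      (mem_univ (range u)) (range_nonempty u) hu.directedOn_range (isLUB_iSup (f := u)) h
  exact ⟨i, hi⟩

end Scott

namespace TopologicalSpace.Opens

variable {X : Type*} [TopologicalSpace X] [T1Space X]

def complSingleton (x : X) : Opens X := ⟨{x}ᶜ, isOpen_compl_singleton⟩

@[simp]
theorem coe_complSingleton (x : X) : (complSingleton x : Set X) = {x}ᶜ := rfl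

theorem le_complSingleton_iff {U : Opens X} {x : X} : U ≤ complSingleton x ↔ x ∉ U := by
  rw [← SetLike.coe_subset_coe, coe_complSingleton, subset_compl_singleton_iff, SetLike.mem_coe]

end TopologicalSpace.Opens

open Opens

section ComplSingleton

variable {X : Type*} [TopologicalSpace X] [T1Space X] {v : Set (WithScott (Opens X))}

theorem IsOpen.exists_toScott_complSingleton_mem (hv : IsOpen v) (htop : toScott ⊤ ∈ v)
    {C : Set X} (hC : IsClosed C) (hCc : ¬IsCompact C) :
    ∃ y ∈ C, toScott (complSingleton y) ∈ v := by
  by_contra! hnot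
  have subset_of_mem : ∀ U : Opens X, toScott U ∈ v → C ⊆ U := fun U hU y hy => by
    by_contra hyU
    exact hnot y hy (hv.toScott_mem_of_le (le_complSingleton_iff.mpr hyU) hU)
  refine hCc (isCompact_of_finite_subcover fun U hUo hCU => ?_)
  -- `C` is compact because the sets `Cᶜ ∪ ⋃ i ∈ t, U i` form a directed family with supremum `⊤`.
  let W (t : Finset _) : Opens X :=
    ⟨Cᶜ ∪ ⋃ i ∈ t, U i, hC.isOpen_compl.union (isOpen_biUnion fun i _ => hUo i)⟩
  have hW : Directed (· ≤ ·) W := directed_of_isDirected_le fun s t hst =>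
    union_subset_union_right _ (biUnion_subset_biUnion_left hst)
  have hWtop : ⨆ t, W t = ⊤ := by
    refine eq_top_iff.mpr fun y _ => ?_
    rw [← SetLike.mem_coe, Opens.coe_iSup, mem_iUnion]
    by_cases hy : y ∈ C
    · obtain ⟨i, hi⟩ := mem_iUnion.mp (hCU hy)
      exact ⟨{i}, Or.inr (by simpa using hi)⟩
    · exact ⟨∅, Or.inl hy⟩
  obtain ⟨t, ht⟩ := hv.exists_toScott_mem_of_iSup_mem hW (hWtop ▸ htop)
  exact ⟨t, fun y hy => (subset_of_mem _ ht hy).resolve_left (· hy)⟩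

end ComplSingleton

section Regular

variable {X : Type*} [TopologicalSpace X] [RegularSpace X] [T1Space X]
  {v : Set (WithScott (Opens X))}

theorem IsOpen.isOpen_setOf_toScott_complSingleton_mem (hv : IsOpen v) :
    IsOpen {x : X | toScott (complSingleton x) ∈ v} := by
  refine isOpen_iff_mem_nhds.mpr fun x hx => ?_
  let W (N : {N // N ∈ 𝓝 x}) : Opens X := ⟨(closure N.1)ᶜ, isClosed_closure.isOpen_compl⟩
  have hW : Directed (· ≤ ·) W := fun N M =>
    ⟨⟨N.1 ∩ M.1, inter_mem N.2 M.2⟩,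
      compl_subset_compl.mpr (closure_mono inter_subset_left),
      compl_subset_compl.mpr (closure_mono inter_subset_right)⟩
  have hWsup : ⨆ N, W N = complSingleton x := by
    ext y
    rw [Opens.coe_iSup, mem_iUnion, coe_complSingleton, mem_compl_singleton_iff]
    constructor
    · rintro ⟨N, hy⟩ rfl
      exact hy (subset_closure (mem_of_mem_nhds N.2))
    · intro hyx
      obtain ⟨N, hN, hNc, hNy⟩ :=
        exists_mem_nhds_isClosed_subset (compl_singleton_mem_nhds hyx.symm)
      exact ⟨⟨N, hN⟩, show y ∉ closure N by rw [hNc.closure_eq]; exact fun hy => hNy hy rfl⟩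
  obtain ⟨N, hN⟩ := hv.exists_toScott_mem_of_iSup_mem hW (hWsup ▸ hx)
  filter_upwards [N.2] with z hz
  exact hv.toScott_mem_of_le (le_complSingleton_iff.mpr (not_not_intro (subset_closure hz))) hN

end Regular


section Product

variable {X : Type*} [TopologicalSpace X] {A : Set (X × WithScott (Opens X))}

theorem IsOpen.mk_top_mem [T1Space X] (hA : IsOpen A) {x : X}
    (hx : (x, toScott (complSingleton x)) ∈ A) : (x, toScott ⊤) ∈ A := by
  obtain ⟨u, v, -, hv, hxu, hxv, huv⟩ := isOpen_prod_iff.mp hA _ _ hx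
  exact huv ⟨hxu, hv.toScott_mem_of_le le_top hxv⟩

variable [RegularSpace X] [T1Space X]

theorem IsOpen.isOpen_setOf_mk_complSingleton_mem (hA : IsOpen A) :
    IsOpen {x : X | (x, toScott (complSingleton x)) ∈ A} := by
  refine isOpen_iff_forall_mem_open.mpr fun x hx => ?_
  obtain ⟨u, v, hu, hv, hxu, hxv, huv⟩ := isOpen_prod_iff.mp hA _ _ hx
  exact ⟨u ∩ {y | toScott (complSingleton y) ∈ v}, fun y hy => huv hy,
    hu.inter hv.isOpen_setOf_toScott_complSingleton_mem, hxu, hxv⟩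

theorem IsOpen.mem_closure_setOf_mk_complSingleton_mem (hA : IsOpen A) {x : X}
    (hx : ∀ K ∈ 𝓝 x, ¬IsCompact K) (hxA : (x, toScott ⊤) ∈ A) :
    x ∈ closure {y : X | (y, toScott (complSingleton y)) ∈ A} := by
  obtain ⟨u, v, hu, hv, hxu, hxv, huv⟩ := isOpen_prod_iff.mp hA _ _ hxA
  refine mem_closure_iff_nhds.mpr fun t ht => ?_
  obtain ⟨C, hC, hCc, hCut⟩ := exists_mem_nhds_isClosed_subset (inter_mem (hu.mem_nhds hxu) ht)
  obtain ⟨y, hyC, hyv⟩ := hv.exists_toScott_complSingleton_mem hxv hCc (hx C hC)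
  exact ⟨y, (hCut hyC).2, huv ⟨(hCut hyC).1, hyv⟩⟩

theorem eventually_residual_mk_complSingleton_mem_iff
    (hX : ∀ x : X, ∀ K ∈ 𝓝 x, ¬IsCompact K)
    {A : Set (X × WithScott (Opens X))}
    (hA : MeasurableSet[borel (X × WithScott (Opens X))] A) :
    ∀ᶠ x in residual X, (x, toScott (complSingleton x)) ∈ A ↔ (x, toScott ⊤) ∈ A := by
  refine eventually_mem_iff_mem_of_measurableSet_generateFrom (fun t (ht : IsOpen t) => ?_) hA
  exact eventually_residual_mem_iff_mem ht.isOpen_setOf_mk_complSingleton_mem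
    (fun x => ht.mk_top_mem) (fun x => ht.mem_closure_setOf_mk_complSingleton_mem (hX x))

end Product

theorem Pi.not_isCompact_of_mem_nhds {ι α : Type*} [Infinite ι] [TopologicalSpace α]
    [NoncompactSpace α] {x : ι → α} {K : Set (ι → α)} (hK : K ∈ 𝓝 x) : ¬IsCompact K := by
  classical
  obtain ⟨I, hI, t, ht, hIK⟩ := Filter.mem_pi.mp (nhds_pi (a := x) ▸ hK)
  obtain ⟨i, hi⟩ := hI.exists_notMem
  intro hKc
  refine noncompact_univ α (hKc.image (continuous_apply i) |>.of_isClosed_subset isClosed_univ ?_)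
  refine fun a _ => ⟨Function.update x i a, hIK fun j hj => ?_, Function.update_self i a x⟩
  rw [Function.update_of_ne (ne_of_mem_of_not_mem hj hi)]
  exact mem_of_mem_nhds (ht j)

/-- For every Borel subset `A` of `(ℕ → ℕ) × Opens(ℕ → ℕ)` (product of the Baire topology
and the Scott topology), there is a dense `Gδ` set `G` of Baire space such that for every
`f ∈ G`, `(f, (ℕ → ℕ) \ {f}) ∈ A ↔ (f, ℕ → ℕ) ∈ A`. -/
theorem stmt1 (A : Set ((ℕ → ℕ) × Topology.WithScott (Opens (ℕ → ℕ))))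
    (hA : MeasurableSet[borel ((ℕ → ℕ) × Topology.WithScott (Opens (ℕ → ℕ)))] A) :
    ∃ G : Set (ℕ → ℕ), Dense G ∧ IsGδ G ∧ ∀ f ∈ G,
      ((f, Topology.WithScott.toScott (⟨{f}ᶜ, isOpen_compl_singleton⟩ : Opens (ℕ → ℕ))) ∈ A ↔
        (f, Topology.WithScott.toScott (⊤ : Opens (ℕ → ℕ))) ∈ A) := by
  obtain ⟨G, hGA, hG, hGdense⟩ := mem_residual.mp
    (eventually_residual_mk_complSingleton_mem_iff (fun _ _ => Pi.not_isCompact_of_mem_nhds) hA)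
  exact ⟨G, hGdense, hG, fun f hf => hGA hf⟩
end

section
/- Let u be a finite sequence of natural numbers, [u] = {f ∈ ℕ → ℕ : u is a prefix of f} the corresponding cylinder, and K a compact subset of the Baire space. Set A = [u] × {U ∈ Opens(ℕ → ℕ) : K ⊆ U} and G = ((ℕ → ℕ) \ [u]) ∪ ([u] \ K). Then G is a dense open subset of the Baire space, and for every f ∈ G: (f, (ℕ → ℕ) \ {f}) ∈ A if and only if (f, ℕ → ℕ) ∈ A. More precisely, for f ∉ [u] neither pair belongs to A, and for f ∈ [u] \ K both pairs belong to A. -/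
open Topology TopologicalSpace

section Pi

variable {ι : Type*} [Infinite ι] {X : ι → Type*} [∀ i, TopologicalSpace (X i)]
  [∀ i, NoncompactSpace (X i)] {K : Set (∀ i, X i)}

/- Each coordinate projection of a compact set is compact, while a basic open set leaves some
coordinate completely free; so if a compact set had interior, some factor would be compact. -/
theorem IsCompact.interior_eq_empty_of_pi (hK : IsCompact K) : interior K = ∅ := by
  classical
  by_contra hne
  obtain ⟨f, hf⟩ := Set.nonempty_iff_ne_empty.mpr hne
  obtain ⟨I, v, hfv, hvK⟩ := isOpen_pi_iff.mp isOpen_interior f hf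
  obtain ⟨i, hi⟩ := I.exists_notMem
  have hproj : Set.univ ⊆ Function.eval i '' K := fun x _ => by
    refine ⟨Function.update f i x, interior_subset (hvK fun j hj => ?_), by simp⟩
    rw [Function.update_of_ne (ne_of_mem_of_not_mem hj hi)]
    exact (hfv j hj).2
  exact noncompact_univ (X i)
    ((hK.image (continuous_apply i)).of_isClosed_subset isClosed_univ hproj)

theorem IsCompact.dense_compl_of_pi (hK : IsCompact K) : Dense Kᶜ :=
  interior_eq_empty_iff_dense_compl.mp hK.interior_eq_empty_of_pi

end Pi

/-- Given a finite sequence `u`, the cylinder `[u]`, a compact `K`, the basic open set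
`A = [u] × {U ∈ Opens(ℕ → ℕ) : K ⊆ U}` and `G = [u]ᶜ ∪ ([u] \ K)`: `G` is dense open, for
every `f ∈ G` we have `(f, (ℕ → ℕ) \ {f}) ∈ A ↔ (f, ℕ → ℕ) ∈ A`; more precisely for
`f ∉ [u]` neither pair is in `A` and for `f ∈ [u] \ K` both pairs are in `A`. -/
theorem stmt2 (u : List ℕ) (K : Set (ℕ → ℕ)) (hK : IsCompact K) :
    let cyl : Set (ℕ → ℕ) := {f | ∀ i < u.length, f i = u.getD i 0}
    let A : Set ((ℕ → ℕ) × Opens (ℕ → ℕ)) :=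
      cyl ×ˢ {U : Opens (ℕ → ℕ) | K ⊆ (U : Set (ℕ → ℕ))}
    let G : Set (ℕ → ℕ) := cylᶜ ∪ (cyl \ K)
    IsOpen G ∧ Dense G ∧
      (∀ f ∈ G,
        ((f, (⟨{f}ᶜ, isOpen_compl_singleton⟩ : Opens (ℕ → ℕ))) ∈ A ↔
          (f, (⊤ : Opens (ℕ → ℕ))) ∈ A)) ∧
      (∀ f ∉ cyl,
        (f, (⟨{f}ᶜ, isOpen_compl_singleton⟩ : Opens (ℕ → ℕ))) ∉ A ∧
          (f, (⊤ : Opens (ℕ → ℕ))) ∉ A) ∧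
      (∀ f ∈ cyl \ K,
        (f, (⟨{f}ᶜ, isOpen_compl_singleton⟩ : Opens (ℕ → ℕ))) ∈ A ∧
          (f, (⊤ : Opens (ℕ → ℕ))) ∈ A) := by
  intro cyl A G
  have hcyl : IsClosed cyl := by
    have hpi : cyl = Set.pi {i | i < u.length} fun i => {u.getD i 0} := by
      ext f; simp [cyl]
    exact hpi ▸ isClosed_set_pi fun _ _ => isClosed_singleton
  have hG : G = (cyl ∩ K)ᶜ := by
    ext f; simp only [G, Set.mem_union, Set.mem_compl_iff, Set.mem_sdiff, Set.mem_inter_iff]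
    tauto
  have outside : ∀ f ∉ cyl,
      (f, (⟨{f}ᶜ, isOpen_compl_singleton⟩ : Opens (ℕ → ℕ))) ∉ A ∧ (f, (⊤ : Opens (ℕ → ℕ))) ∉ A :=
    fun f hf => ⟨fun h => hf h.1, fun h => hf h.1⟩
  have inside : ∀ f ∈ cyl \ K,
      (f, (⟨{f}ᶜ, isOpen_compl_singleton⟩ : Opens (ℕ → ℕ))) ∈ A ∧ (f, (⊤ : Opens (ℕ → ℕ))) ∈ A :=
    fun f hf =>
      ⟨⟨hf.1, Set.subset_compl_singleton_iff.mpr hf.2⟩, ⟨hf.1, Set.subset_univ K⟩⟩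
  refine ⟨hG ▸ (hcyl.inter hK.isClosed).isOpen_compl,
    hK.dense_compl_of_pi.mono (hG ▸ Set.compl_subset_compl.mpr Set.inter_subset_right),
    ?_, outside, inside⟩
  rintro f (hf | hf)
  · exact iff_of_false (outside f hf).1 (outside f hf).2
  · exact iff_of_true (inside f hf).1 (inside f hf).2
end

section
/- The set E = {(f, U) : f ∈ U} ⊆ (ℕ → ℕ) × Opens(ℕ → ℕ) is not open for the product topology, where ℕ → ℕ carries the Baire space topology and Opens(ℕ → ℕ) carries the Scott topology. Equivalently, the evaluation is not continuous with respect to this product topology. -/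
open Topology TopologicalSpace

/-!
The pair `(0, ⊤)` lies in `E`. A product neighbourhood `V × W` of it is too coarse: `V` constrains
only finitely many coordinates, so it contains every `update 0 k n` for some coordinate `k`, while
`⊤` is the directed union of the open sets `{f | f k < n}`, so the Scott-open `W` contains one of
them. But `update 0 k n ∉ {f | f k < n}`.
-/

theorem exists_forall_update_mem_of_mem_nhds {ι : Type*} [Infinite ι] [DecidableEq ι]
    {X : ι → Type*} [∀ i, TopologicalSpace (X i)] {f : ∀ i, X i} {V : Set (∀ i, X i)}
    (hV : V ∈ 𝓝 f) : ∃ k, ∀ a, Function.update f k a ∈ V := by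
  rw [nhds_pi, Filter.mem_pi'] at hV
  obtain ⟨I, t, ht, hIt⟩ := hV
  obtain ⟨k, hk⟩ := Infinite.exists_notMem_finset I
  refine ⟨k, fun a => hIt fun i hi => ?_⟩
  have hik : i ≠ k := fun h => hk (h ▸ hi)
  simpa [Function.update_of_ne hik] using mem_of_mem_nhds (ht i)

theorem Topology.IsScott.exists_mem_of_isLUB_mem {α ι : Type*} [Preorder α] [TopologicalSpace α]
    [IsScott α Set.univ] [Nonempty ι] {s : Set α} (hs : IsOpen s) {f : ι → α}
    (hf : Directed (· ≤ ·) f) {a : α} (ha : IsLUB (Set.range f) a) (has : a ∈ s) :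
    ∃ i, f i ∈ s := by
  obtain ⟨-, ⟨i, rfl⟩, hi⟩ :=
    (isOpen_iff_isUpperSet_and_dirSupInaccOn.1 hs).2 (Set.mem_univ _) (Set.range_nonempty f)
      (directedOn_range.2 hf) ha has
  exact ⟨i, hi⟩

def coordLtOpens (k n : ℕ) : Opens (ℕ → ℕ) :=
  ⟨{f | f k < n}, isOpen_lt (continuous_apply k) continuous_const⟩

@[simp]
theorem mem_coordLtOpens {k n : ℕ} {f : ℕ → ℕ} : f ∈ coordLtOpens k n ↔ f k < n :=
  Iff.rfl

theorem monotone_coordLtOpens (k : ℕ) : Monotone (coordLtOpens k) :=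
  fun _ _ hmn _ hf => mem_coordLtOpens.2 (lt_of_lt_of_le (mem_coordLtOpens.1 hf) hmn)

theorem iSup_coordLtOpens (k : ℕ) : ⨆ n, coordLtOpens k n = ⊤ :=
  eq_top_iff.2 fun f _ => Opens.mem_iSup.2 ⟨f k + 1, mem_coordLtOpens.2 (Nat.lt_succ_self _)⟩

/-- The set `E = {(f, U) : f ∈ U}` is not open for the product of the Baire topology on
`ℕ → ℕ` and the Scott topology on `Opens (ℕ → ℕ)`. -/
theorem stmt3 :
    ¬ IsOpen {p : (ℕ → ℕ) × Topology.WithScott (Opens (ℕ → ℕ)) |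
        p.1 ∈ Topology.WithScott.ofScott p.2} := by
  intro hE
  obtain ⟨V, W, hV, hW, h0V, htopW, hVW⟩ :=
    isOpen_prod_iff.1 hE 0 (WithScott.toScott ⊤) trivial
  obtain ⟨k, hk⟩ := exists_forall_update_mem_of_mem_nhds (hV.mem_nhds h0V)
  have hlub : IsLUB (Set.range fun n => WithScott.toScott (coordLtOpens k n))
      (WithScott.toScott ⊤) := by
    have := isLUB_iSup (f := coordLtOpens k)
    rwa [iSup_coordLtOpens] at this
  obtain ⟨n, hn⟩ := IsScott.exists_mem_of_isLUB_mem hW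
    (monotone_coordLtOpens k).directed_le hlub htopW
  have hlt : Function.update (0 : ℕ → ℕ) k n ∈ coordLtOpens k n :=
    hVW (Set.mk_mem_prod (hk n) hn)
  simp at hlt
end

section
/- The map s₁ : (ℕ → ℕ) → Opens(ℕ → ℕ) defined by s₁(f) = ⋃ {n : f n ≠ 0} {g ∈ ℕ → ℕ : g 0 = n and g (f n) = n} is continuous from the Baire space to Opens(ℕ → ℕ) with the Scott topology (each set {g : g 0 = n ∧ g (f n) = n} is open, so s₁(f) is indeed an open set). -/
open Topology TopologicalSpace

/-!
`s₁ f` is the supremum over `n` of open sets that depend only on the value `f n`, so each of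
them is a locally constant function of `f`. A pointwise supremum of locally constant maps into a
complete lattice is continuous for the Scott topology: it is the directed supremum of its finite
partial suprema, which are still locally constant, and a Scott-open set containing a directed
supremum already contains one of its members, which does not change near `f`.
-/

/-- The open subset `s₁ f = ⋃_{n : f n ≠ 0} {g | g 0 = n ∧ g (f n) = n}` of the Baire
space, associated to `f : ℕ → ℕ`. -/
def s₁ (f : ℕ → ℕ) : Opens (ℕ → ℕ) :=
  ⟨⋃ n ∈ {n : ℕ | f n ≠ 0}, {g : ℕ → ℕ | g 0 = n ∧ g (f n) = n}, by
    refine isOpen_biUnion fun n _ => ?_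
    have : {g : ℕ → ℕ | g 0 = n ∧ g (f n) = n}
        = (fun g : ℕ → ℕ => g 0) ⁻¹' {n} ∩ (fun g : ℕ → ℕ => g (f n)) ⁻¹' {n} := by
      ext g; simp [Set.mem_setOf_eq]
    rw [this]
    exact ((isOpen_discrete ({n} : Set ℕ)).preimage (continuous_apply 0)).inter
      ((isOpen_discrete ({n} : Set ℕ)).preimage (continuous_apply (f n)))⟩

theorem IsLocallyConstant.finset_sup {X ι β : Type*} [TopologicalSpace X] [SemilatticeSup β]
    [OrderBot β] {f : ι → X → β} (hf : ∀ i, IsLocallyConstant (f i)) (s : Finset ι) :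
    IsLocallyConstant fun x => s.sup (f · x) := by
  classical
  induction s using Finset.induction_on with
  | empty => exact IsLocallyConstant.const ⊥
  | insert i s _ ih => simpa using (hf i).comp₂ ih (· ⊔ ·)

namespace Topology.WithScott

variable {X α ι : Type*} [TopologicalSpace X] [CompleteLattice α]

theorem continuous_toScott_iSup_of_directed [Nonempty ι] {g : ι → X → α}
    (hdir : Directed (· ≤ ·) g) (hg : ∀ i, Continuous fun x => toScott (g i x)) :
    Continuous fun x => toScott (⨆ i, g i x) := by
  refine continuous_def.2 fun W hW => isOpen_iff_mem_nhds.2 fun x hx => ?_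
  obtain ⟨hup, hinacc⟩ := (IsScott.isOpen_iff_isUpperSet_and_dirSupInaccOn (D := Set.univ)).1 hW
  have hdir_x : DirectedOn (· ≤ ·) (Set.range fun i => toScott (g i x)) :=
    Directed.directedOn_range fun i j => (hdir i j).imp fun _ hk => ⟨hk.1 x, hk.2 x⟩
  obtain ⟨_, ⟨i, rfl⟩, hi⟩ :=
    hinacc (Set.mem_univ _) (Set.range_nonempty _) hdir_x (isLUB_iSup (f := fun i => g i x)) hx
  filter_upwards [(hg i).continuousAt.preimage_mem_nhds (hW.mem_nhds hi)] with y hy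
  exact hup (le_iSup (fun i => g i y) i) hy

theorem continuous_toScott_iSup_of_isLocallyConstant {f : ι → X → α}
    (hf : ∀ i, IsLocallyConstant (f i)) : Continuous fun x => toScott (⨆ i, f i x) := by
  classical
  have hfin (x : X) : ⨆ i, f i x = ⨆ s : Finset ι, s.sup (f · x) := by
    simp only [Finset.sup_eq_iSup]
    exact iSup_eq_iSup_finset _
  simp only [hfin]
  refine continuous_toScott_iSup_of_directed (fun s t => ⟨s ∪ t, ?_, ?_⟩) fun s =>
    ((IsLocallyConstant.finset_sup hf s).comp toScott).continuous
  all_goals exact fun x => Finset.sup_mono (by simp)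

end Topology.WithScott

def pairCylinder (n m : ℕ) : Opens (ℕ → ℕ) :=
  ⟨{g | g 0 = n ∧ g m = n}, by
    rw [Set.ofPred_and]
    exact ((isOpen_discrete {n}).preimage (continuous_apply 0)).inter
      ((isOpen_discrete {n}).preimage (continuous_apply m : Continuous fun g : ℕ → ℕ => g m))⟩

theorem s₁_eq_iSup_pairCylinder (f : ℕ → ℕ) :
    s₁ f = ⨆ n, ⨆ (_ : f n ≠ 0), pairCylinder n (f n) := by
  ext g
  simp [s₁, pairCylinder]

/-- The map `s₁` is continuous from the Baire space to `Opens(ℕ → ℕ)` with the Scott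
topology. -/
theorem stmt7 :
    Continuous fun f : ℕ → ℕ => Topology.WithScott.toScott (s₁ f) := by
  simp only [s₁_eq_iSup_pairCylinder]
  exact WithScott.continuous_toScott_iSup_of_isLocallyConstant fun n =>
    (IsLocallyConstant.of_discrete fun m => ⨆ (_ : m ≠ 0), pairCylinder n m).comp_continuous
      (continuous_apply n)
end

section
/- Define s₁ : (ℕ → ℕ) → Opens(ℕ → ℕ) by s₁(f) = ⋃ {n : f n ≠ 0} {g : g 0 = n and g (f n) = n}. For n, k ∈ ℕ let cₙ be the constant function with value n, and let cₙₖ be the function with cₙₖ(i) = n for i ≠ k and cₙₖ(k) = n + 1. Define r₁ : Opens(ℕ → ℕ) → (ℕ → ℕ) by: r₁(U)(n) = 0 if cₙ ∉ U, and otherwise r₁(U)(n) = sup {k ≥ 1 : cₙₖ ∉ U} (this set is finite since U is open and cₙₖ converges to cₙ as k → ∞; the supremum of the empty set is 0). Then r₁ ∘ s₁ is the identity on ℕ → ℕ. -/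
open Topology TopologicalSpace

/-- The constant function `cₙ` with value `n`. -/
def c (n : ℕ) : ℕ → ℕ := fun _ => n

/-- The function `cₙₖ` with `cₙₖ i = n` for `i ≠ k` and `cₙₖ k = n + 1`. -/
def c' (n k : ℕ) : ℕ → ℕ := Function.update (fun _ => n) k (n + 1)

/-- The map `r₁ : Opens(ℕ → ℕ) → (ℕ → ℕ)`: `r₁ U n = 0` if `cₙ ∉ U`, and otherwise
`r₁ U n = sup {k ≥ 1 : cₙₖ ∉ U}` (the supremum of the empty set being `0`). -/
noncomputable def r₁ (U : Opens (ℕ → ℕ)) : ℕ → ℕ := fun n =>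
  open scoped Classical in
  if c n ∈ U then sSup {k : ℕ | 1 ≤ k ∧ c' n k ∉ U} else 0

/-- The value `g 0` forces the index of the union defining `s₁ f`. -/
theorem mem_s₁_iff {f g : ℕ → ℕ} : g ∈ s₁ f ↔ f (g 0) ≠ 0 ∧ g (f (g 0)) = g 0 := by
  change g ∈ ⋃ n ∈ {n : ℕ | f n ≠ 0}, {g : ℕ → ℕ | g 0 = n ∧ g (f n) = n} ↔ _
  simp only [Set.mem_iUnion, Set.mem_ofPred_eq, exists_prop]
  constructor
  · rintro ⟨n, hfn, rfl, hg⟩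
    exact ⟨hfn, hg⟩
  · exact fun h => ⟨g 0, h.1, rfl, h.2⟩

theorem c_mem_s₁_iff {f : ℕ → ℕ} {n : ℕ} : c n ∈ s₁ f ↔ f n ≠ 0 := by
  simp [mem_s₁_iff, c]

theorem c'_mem_s₁_iff {f : ℕ → ℕ} {n k : ℕ} (hk : k ≠ 0) :
    c' n k ∈ s₁ f ↔ f n ≠ 0 ∧ f n ≠ k := by
  simp [mem_s₁_iff, c', Function.update_apply, hk.symm]

theorem setOf_c'_notMem_s₁ {f : ℕ → ℕ} {n : ℕ} (hn : f n ≠ 0) :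
    {k : ℕ | 1 ≤ k ∧ c' n k ∉ s₁ f} = {f n} := by
  ext k
  simp only [Set.mem_ofPred_eq, Set.mem_singleton_iff, Nat.one_le_iff_ne_zero]
  constructor
  · rintro ⟨hk, hk'⟩
    simpa [c'_mem_s₁_iff hk, hn, eq_comm] using hk'
  · rintro rfl
    simp [c'_mem_s₁_iff hn, hn]

theorem r₁_s₁_apply (f : ℕ → ℕ) (n : ℕ) : r₁ (s₁ f) n = f n := by
  by_cases hn : f n = 0
  · simp [r₁, c_mem_s₁_iff, hn]
  · simp [r₁, c_mem_s₁_iff, hn, setOf_c'_notMem_s₁ hn]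

/-- `r₁ ∘ s₁` is the identity on the Baire space. -/
theorem stmt8 : r₁ ∘ s₁ = id :=
  funext fun f => funext (r₁_s₁_apply f)
end

section
/- Define r₁ : Opens(ℕ → ℕ) → (ℕ → ℕ) by: r₁(U)(n) = 0 if cₙ ∉ U, and otherwise r₁(U)(n) = sup {k ≥ 1 : cₙₖ ∉ U} (a finite set since U is open and cₙₖ → cₙ; sup of the empty set is 0), where cₙ is the constant function with value n and cₙₖ(i) = n for i ≠ k, cₙₖ(k) = n + 1. Then the set F = {(U, V) ∈ Opens(ℕ → ℕ) × Opens(ℕ → ℕ) : r₁(U) ∈ V} is not a member of the Borel σ-algebra generated by the product of the Scott topologies on Opens(ℕ → ℕ) × Opens(ℕ → ℕ). -/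
open Topology TopologicalSpace MeasureTheory

namespace Stmt9

open Topology.WithScott Set

abbrev Ω : Type := ℕ → ℕ
abbrev X : Type := Topology.WithScott (Opens Ω)

/-! ### Basic open sets of Baire space -/

/-- The basic open set of functions equal to `n` on all coordinates `≤ a`. -/
def W (n a : ℕ) : Opens Ω :=
  ⟨{g : Ω | ∀ i ≤ a, g i = n}, by
    have h : {g : Ω | ∀ i ≤ a, g i = n} = ⋂ i ∈ Set.Iic a, (fun g : Ω => g i) ⁻¹' {n} := by
      ext g; simp
    rw [h]
    exact (Set.finite_Iic a).isOpen_biInter fun i _ =>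
      (continuous_apply i).isOpen_preimage _ (isOpen_discrete _)⟩

lemma mem_W {g : Ω} {n a : ℕ} : g ∈ W n a ↔ ∀ i ≤ a, g i = n := Iff.rfl

/-- `U_f = ⋃ₙ W n (f n)`. -/
def Uf (f : ℕ → ℕ) : Opens Ω := ⨆ n, W n (f n)

/-- Partial stage of `U_f`. -/
def ULf (f : ℕ → ℕ) (t : ℕ) : Opens Ω := ⨆ n ∈ Finset.range t, W n (f n)

lemma mem_Uf {g : Ω} {f : ℕ → ℕ} : g ∈ Uf f ↔ ∃ n, ∀ i ≤ f n, g i = n := by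
  simp [Uf, Opens.mem_iSup, mem_W]

lemma ULf_le_Uf (f : ℕ → ℕ) (t : ℕ) : ULf f t ≤ Uf f :=
  iSup₂_le fun n _ => le_iSup (fun n => W n (f n)) n

lemma ULf_mono (f : ℕ → ℕ) : Monotone (ULf f) := fun a b hab =>
  biSup_mono fun n hn => Finset.mem_range.mpr (lt_of_lt_of_le (Finset.mem_range.mp hn) hab)

lemma iSup_ULf (f : ℕ → ℕ) : ⨆ t, ULf f t = Uf f := by
  apply le_antisymm
  · exact iSup_le fun t => ULf_le_Uf f t
  · refine iSup_le fun n => ?_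
    calc W n (f n) ≤ ULf f (n + 1) :=
          le_iSup₂ (f := fun m (_ : m ∈ Finset.range (n+1)) => W m (f m)) n
            (Finset.self_mem_range_succ n)
      _ ≤ ⨆ t, ULf f t := le_iSup (ULf f) (n + 1)

/-! ### Cylinders -/

/-- The cylinder determined (via `getD`) by a finite list. -/
def Cyl (l : List ℕ) : Set Ω := {g | ∀ k < l.length, g k = l.getD k 0}

lemma Cyl_eq (l : List ℕ) :
    Cyl l = ⋂ k ∈ Set.Iio l.length, (fun g : Ω => g k) ⁻¹' {l.getD k 0} := by
  ext g; simp [Cyl]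

lemma isOpen_Cyl (l : List ℕ) : IsOpen (Cyl l) := by
  rw [Cyl_eq]
  exact (Set.finite_Iio _).isOpen_biInter fun k _ =>
    (continuous_apply k).isOpen_preimage _ (isOpen_discrete _)

lemma isClosed_Cyl (l : List ℕ) : IsClosed (Cyl l) := by
  rw [Cyl_eq]
  exact isClosed_biInter fun k _ => (isClosed_singleton).preimage (continuous_apply k)

/-- Complement of a cylinder, as an open set. -/
def Vm (l : List ℕ) : Opens Ω := ⟨(Cyl l)ᶜ, (isClosed_Cyl l).isOpen_compl⟩

/-- Complement of a point, as an open set. -/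
def Vf (f : Ω) : Opens Ω := ⟨{f}ᶜ, isOpen_compl_singleton⟩

/-- Part of a cylinder with a bounded next coordinate. -/
def Et (l : List ℕ) (m : ℕ) : Opens Ω :=
  ⟨Cyl l ∩ (fun g : Ω => g l.length) ⁻¹' Set.Iio m,
    (isOpen_Cyl l).inter
      (by exact (continuous_apply (A := fun _ : ℕ => ℕ) l.length).isOpen_preimage (Set.Iio m) (isOpen_discrete _))⟩

lemma mem_sup' {u v : Opens Ω} {g : Ω} : g ∈ u ⊔ v ↔ g ∈ u ∨ g ∈ v := by
  constructor
  · intro h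
    have h' : g ∈ (u : Set Ω) ∪ (v : Set Ω) := by
      rwa [← Opens.coe_sup]
    exact h'
  · intro h
    have h' : g ∈ (u : Set Ω) ∪ (v : Set Ω) := h
    rw [← Opens.coe_sup] at h'
    exact h'

lemma iSup_VmEt (l : List ℕ) : ⨆ m, (Vm l ⊔ Et l m) = ⊤ := by
  rw [eq_top_iff]
  rintro g -
  show g ∈ ⨆ m, (Vm l ⊔ Et l m)
  rw [Opens.mem_iSup]
  by_cases hg : g ∈ Cyl l
  · exact ⟨g l.length + 1, mem_sup'.mpr (Or.inr (show g ∈ Cyl l ∩ (fun g : Ω => g l.length) ⁻¹' Set.Iio (g l.length + 1) from ⟨hg, Nat.lt_succ_self _⟩))⟩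
  · exact ⟨0, mem_sup'.mpr (Or.inl hg)⟩

/-! ### Scott topology facts -/

lemma upper_of_isOpen {u : Set X} (hu : IsOpen u) : IsUpperSet u :=
  Topology.IsScott.isUpperSet_of_isOpen (D := Set.univ) hu

lemma dirSupInacc_of_isOpen {u : Set X} (hu : IsOpen u) : DirSupInacc u := by
  have h := (Topology.IsScott.isOpen_iff_isUpperSet_and_dirSupInaccOn (D := Set.univ)).mp hu
  exact dirSupInaccOn_univ.mp h.2

lemma prod_upper {G : Set (X × X)} (hG : IsOpen G) {a1 a2 b1 b2 : Opens Ω}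
    (h1 : a1 ≤ b1) (h2 : a2 ≤ b2) (ha : (toScott a1, toScott a2) ∈ G) :
    (toScott b1, toScott b2) ∈ G := by
  obtain ⟨u, v, hu, hv, hau, hav, huv⟩ := isOpen_prod_iff.mp hG _ _ ha
  exact huv (Set.mem_prod.mpr
    ⟨upper_of_isOpen hu h1 hau, upper_of_isOpen hv h2 hav⟩)

lemma chain_mem {G : Set (X × X)} (hG : IsOpen G) {A B : ℕ → Opens Ω}
    (hA : Monotone A) (hB : Monotone B)
    (h : (toScott (⨆ j, A j), toScott (⨆ j, B j)) ∈ G) :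
    ∃ j, (toScott (A j), toScott (B j)) ∈ G := by
  obtain ⟨u, v, hu, hv, hau, hav, huv⟩ := isOpen_prod_iff.mp hG _ _ h
  have hAX : Monotone (fun j => toScott (A j)) := fun a b hab => hA hab
  have hBX : Monotone (fun j => toScott (B j)) := fun a b hab => hB hab
  have hlubA : IsLUB (Set.range fun j => toScott (A j)) (toScott (⨆ j, A j)) :=
    isLUB_iSup (α := Opens Ω) (f := A)
  have hlubB : IsLUB (Set.range fun j => toScott (B j)) (toScott (⨆ j, B j)) :=
    isLUB_iSup (α := Opens Ω) (f := B)
  obtain ⟨x, hxd, hxu⟩ := dirSupInacc_of_isOpen hu (Set.range_nonempty _)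
    hAX.directed_le.directedOn_range hlubA hau
  obtain ⟨y, hyd, hyv⟩ := dirSupInacc_of_isOpen hv (Set.range_nonempty _)
    hBX.directed_le.directedOn_range hlubB hav
  obtain ⟨j₁, rfl⟩ := hxd
  obtain ⟨j₂, rfl⟩ := hyd
  refine ⟨max j₁ j₂, huv (Set.mem_prod.mpr ⟨?_, ?_⟩)⟩
  · exact upper_of_isOpen hu (hAX (le_max_left j₁ j₂)) hxu
  · exact upper_of_isOpen hv (hBX (le_max_right j₁ j₂)) hyv

lemma digit_descent {G : Set (X × X)} (hG : IsOpen G) {U : Opens Ω} (l : List ℕ)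
    (h : (toScott U, toScott (⊤ : Opens Ω)) ∈ G) :
    ∃ i, 1 ≤ i ∧ (toScott U, toScott (Vm (l ++ [i]))) ∈ G := by
  have h' : (toScott (⨆ _ : ℕ, U), toScott (⨆ m, (Vm l ⊔ Et l m))) ∈ G := by
    rw [iSup_VmEt, iSup_const]; exact h
  have hmono : Monotone (fun m => Vm l ⊔ Et l m) := by
    intro a b hab
    refine sup_le_sup_left ?_ (Vm l)
    intro g hg
    exact (show g ∈ Cyl l ∩ (fun g : Ω => g l.length) ⁻¹' Set.Iio b from ⟨(show g ∈ Cyl l ∩ (fun g : Ω => g l.length) ⁻¹' Set.Iio a from hg).1, lt_of_lt_of_le (show g ∈ Cyl l ∩ (fun g : Ω => g l.length) ⁻¹' Set.Iio a from hg).2 hab⟩)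
  obtain ⟨j, hj⟩ := chain_mem hG monotone_const hmono h'
  refine ⟨max 1 j, le_max_left _ _, ?_⟩
  refine prod_upper hG (le_refl U) ?_ hj
  intro g hg
  have hg' : g ∈ Vm l ∨ g ∈ Et l j := mem_sup'.mp hg
  intro hmem
  have hmem' : g ∈ Cyl (l ++ [max 1 j]) := hmem
  have hCyl : g ∈ Cyl l := by
    intro k hk
    have hk' : k < (l ++ [max 1 j]).length := by simp; omega
    have := hmem' k hk'
    rwa [List.getD_append _ _ _ _ hk] at this
  have hlen : g l.length = max 1 j := by
    have hk' : l.length < (l ++ [max 1 j]).length := by simp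
    have := hmem' l.length hk'
    rwa [List.getD_append_right _ _ _ _ (le_refl _), Nat.sub_self] at this
  rcases hg' with h1 | h2
  · exact h1 hCyl
  · have h2' : g l.length < j := (show g ∈ Cyl l ∩ (fun g : Ω => g l.length) ⁻¹' Set.Iio j from h2).2
    omega

/-! ### The recursive construction -/

open scoped Classical in
noncomputable def pick (G : ℕ → Set (X × X)) (l : List ℕ) : ℕ :=
  if h : ∃ i, 1 ≤ i ∧
      (toScott (ULf (fun n => l.getD n 1) l.length), toScott (Vm (l ++ [i]))) ∈
        G (Nat.unpair l.length).1
  then h.choose else 1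

noncomputable def stages (G : ℕ → Set (X × X)) : ℕ → List ℕ
  | 0 => []
  | t + 1 => stages G t ++ [pick G (stages G t)]

noncomputable def ff (G : ℕ → Set (X × X)) : ℕ → ℕ := fun t => pick G (stages G t)

lemma stages_succ (G : ℕ → Set (X × X)) (t : ℕ) :
    stages G (t + 1) = stages G t ++ [ff G t] := rfl

lemma length_stages (G : ℕ → Set (X × X)) (t : ℕ) : (stages G t).length = t := by
  induction t with
  | zero => rfl
  | succ t ih => rw [stages_succ]; simp [ih]

lemma getD_stages (G : ℕ → Set (X × X)) (d : ℕ) :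
    ∀ t k, k < t → (stages G t).getD k d = ff G k := by
  intro t
  induction t with
  | zero => intro k hk; omega
  | succ t ih =>
    intro k hk
    rcases Nat.lt_or_ge k t with h | h
    · rw [stages_succ, List.getD_append _ _ _ _ (by rw [length_stages]; exact h)]
      exact ih k h
    · have hk' : k = t := by omega
      subst hk'
      rw [stages_succ, List.getD_append_right _ _ _ _ (by rw [length_stages])]
      rw [length_stages, Nat.sub_self]
      rfl

lemma ULf_stages (G : ℕ → Set (X × X)) (t : ℕ) :
    ULf (fun n => (stages G t).getD n 1) t = ULf (ff G) t := by
  unfold ULf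
  exact biSup_congr fun n hn =>
    congrArg (W n) (getD_stages G 1 t n (Finset.mem_range.mp hn))

lemma ff_pos (G : ℕ → Set (X × X)) (t : ℕ) : 1 ≤ ff G t := by
  unfold ff pick
  split
  · next h => exact h.choose_spec.1
  · exact le_refl 1

lemma ff_mem_Cyl (G : ℕ → Set (X × X)) (t : ℕ) : (ff G : Ω) ∈ Cyl (stages G t) := by
  intro k hk
  rw [length_stages] at hk
  exact (getD_stages G 0 t k hk).symm

lemma Vm_stages_le (G : ℕ → Set (X × X)) (t : ℕ) : Vm (stages G t) ≤ Vf (ff G) := by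
  intro g hg
  simp only [Vf, Opens.coe_mk, Set.mem_compl_iff, Set.mem_singleton_iff]
  rintro rfl
  exact hg (ff_mem_Cyl G t)

/-! ### r₁ on U_f -/

lemma c_mem_Uf (f : ℕ → ℕ) (n : ℕ) : c n ∈ Uf f := mem_Uf.mpr ⟨n, fun i _ => rfl⟩

lemma c'_mem_Uf {f : ℕ → ℕ} (hf1 : ∀ m, 1 ≤ f m) (n k : ℕ) :
    c' n k ∈ Uf f ↔ f n < k := by
  rw [mem_Uf]
  constructor
  · rintro ⟨m, hm⟩
    have hmn : m = n := by
      rcases eq_or_ne k 0 with rfl | hk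
      · have h1 := hm 1 (hf1 m)
        simpa [c', Function.update_apply] using h1.symm
      · have h0 := hm 0 (Nat.zero_le _)
        simpa [c', Function.update_apply, Ne.symm hk] using h0.symm
    subst hmn
    by_contra hlt
    push_neg at hlt
    have := hm k hlt
    simp [c', Function.update_apply] at this
  · intro h
    refine ⟨n, fun i hi => ?_⟩
    have hik : i ≠ k := by omega
    simp [c', Function.update_apply, hik]

lemma r₁_Uf (f : ℕ → ℕ) (hf1 : ∀ m, 1 ≤ f m) : r₁ (Uf f) = f := by
  funext n
  have hset : {k : ℕ | 1 ≤ k ∧ c' n k ∉ Uf f} = {k : ℕ | 1 ≤ k ∧ k ≤ f n} := by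
    ext k
    simp [c'_mem_Uf hf1, Nat.not_lt]
  simp only [r₁]
  rw [if_pos (c_mem_Uf f n), hset]
  apply le_antisymm
  · exact csSup_le ⟨f n, hf1 n, le_refl _⟩ fun k hk => hk.2
  · exact le_csSup ⟨f n, fun k hk => hk.2⟩ ⟨hf1 n, le_refl _⟩

/-! ### The key fooling construction -/

lemma key (G : ℕ → Set (X × X)) (hG : ∀ n, IsOpen (G n)) :
    ∃ p q : X × X, (r₁ (ofScott p.1) ∈ ofScott p.2) ∧ ¬(r₁ (ofScott q.1) ∈ ofScott q.2) ∧
      ∀ n, p ∈ G n ↔ q ∈ G n := by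
  have hf1 : ∀ t, 1 ≤ ff G t := ff_pos G
  refine ⟨(toScott (Uf (ff G)), toScott ⊤), (toScott (Uf (ff G)), toScott (Vf (ff G))),
    ?_, ?_, ?_⟩
  · show r₁ (Uf (ff G)) ∈ (⊤ : Opens Ω)
    exact trivial
  · show ¬ r₁ (Uf (ff G)) ∈ Vf (ff G)
    rw [r₁_Uf (ff G) hf1]
    simp [Vf]
  · intro n
    constructor
    · intro hp
      have h1 : (toScott (⨆ j, ULf (ff G) j), toScott (⨆ _ : ℕ, (⊤ : Opens Ω))) ∈ G n := by
        rw [iSup_ULf, iSup_const]; exact hp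
      obtain ⟨j, hj⟩ := chain_mem (hG n) (ULf_mono (ff G)) monotone_const h1
      set t := Nat.pair n j with ht
      have hj' : (toScott (ULf (ff G) t), toScott (⊤ : Opens Ω)) ∈ G n :=
        prod_upper (hG n) (ULf_mono (ff G) (Nat.right_le_pair n j)) (le_refl _) hj
      have hcond : ∃ i, 1 ≤ i ∧
          (toScott (ULf (fun m => (stages G t).getD m 1) (stages G t).length),
            toScott (Vm (stages G t ++ [i]))) ∈
          G (Nat.unpair (stages G t).length).1 := by
        rw [length_stages, ULf_stages, ht, Nat.unpair_pair]
        exact digit_descent (hG n) (stages G t) hj'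
      have hpickeq : pick G (stages G t) = hcond.choose := by
        unfold pick
        rw [dif_pos hcond]
      obtain ⟨hi1, hmem⟩ := hcond.choose_spec
      rw [← hpickeq] at hmem
      rw [length_stages, ULf_stages] at hmem
      rw [ht, Nat.unpair_pair] at hmem
      have hmem' : (toScott (ULf (ff G) t), toScott (Vm (stages G (t + 1)))) ∈ G n := by
        rw [stages_succ]; exact hmem
      exact prod_upper (hG n) (ULf_le_Uf (ff G) t) (Vm_stages_le G (t + 1)) hmem'
    · intro hq
      exact prod_upper (hG n) (le_refl _) le_top hq

end Stmt9

/-- The set `F = {(U, V) : r₁ U ∈ V}` is not Borel for the product of the Scott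
topologies on `Opens(ℕ → ℕ) × Opens(ℕ → ℕ)`. -/
theorem stmt9 :
    ¬ MeasurableSet[borel (Topology.WithScott (Opens (ℕ → ℕ)) ×
        Topology.WithScott (Opens (ℕ → ℕ)))]
      {p : Topology.WithScott (Opens (ℕ → ℕ)) × Topology.WithScott (Opens (ℕ → ℕ)) |
        r₁ (Topology.WithScott.ofScott p.1) ∈ Topology.WithScott.ofScott p.2} := by
  intro hF
  set F : Set (Stmt9.X × Stmt9.X) :=
    {p : Stmt9.X × Stmt9.X |
      r₁ (Topology.WithScott.ofScott p.1) ∈ Topology.WithScott.ofScott p.2} with hFdef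
  have hF' : MeasurableSet[MeasurableSpace.generateFrom
      {s : Set (Stmt9.X × Stmt9.X) | IsOpen s}] F := hF
  -- Step 1: countably many open generators suffice
  have count : ∀ (s : Set (Stmt9.X × Stmt9.X)),
      MeasurableSet[MeasurableSpace.generateFrom
        {u : Set (Stmt9.X × Stmt9.X) | IsOpen u}] s →
      ∃ g : ℕ → Set (Stmt9.X × Stmt9.X), (∀ n, IsOpen (g n)) ∧
        MeasurableSet[MeasurableSpace.generateFrom (Set.range g)] s := by
    intro s hs
    refine MeasurableSpace.generateFrom_induction
      {u : Set (Stmt9.X × Stmt9.X) | IsOpen u}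
      (fun t _ => ∃ g : ℕ → Set (Stmt9.X × Stmt9.X), (∀ n, IsOpen (g n)) ∧
        MeasurableSet[MeasurableSpace.generateFrom (Set.range g)] t)
      ?_ ?_ ?_ ?_ s hs
    · intro t ht _
      exact ⟨fun _ => t, fun _ => ht,
        MeasurableSpace.measurableSet_generateFrom ⟨0, rfl⟩⟩
    · exact ⟨fun _ => ∅, fun _ => isOpen_empty, MeasurableSpace.measurableSet_empty _⟩
    · rintro t _ ⟨g, hgopen, hgm⟩
      exact ⟨g, hgopen, hgm.compl⟩
    · intro sfam _ h
      choose g hgopen hgm using h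
      refine ⟨fun k => g (Nat.unpair k).1 (Nat.unpair k).2,
        fun k => hgopen _ _, ?_⟩
      refine MeasurableSet.iUnion fun i => ?_
      have hsub : Set.range (g i) ⊆
          Set.range (fun k => g (Nat.unpair k).1 (Nat.unpair k).2) := by
        rintro _ ⟨m, rfl⟩
        exact ⟨Nat.pair i m, by simp⟩
      exact MeasurableSpace.generateFrom_mono hsub _ (hgm i)
  obtain ⟨g, hgopen, hFg⟩ := count F hF'
  -- Step 2: the fooling pair
  obtain ⟨p, q, hpF, hqF, hpq⟩ := Stmt9.key g hgopen
  -- Step 3: p and q agree on every set of σ(range g)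
  have agree : ∀ s, MeasurableSet[MeasurableSpace.generateFrom (Set.range g)] s →
      (p ∈ s ↔ q ∈ s) := by
    intro s hs
    refine MeasurableSpace.generateFrom_induction (Set.range g)
      (fun t _ => (p ∈ t ↔ q ∈ t)) ?_ ?_ ?_ ?_ s hs
    · rintro t ⟨n, rfl⟩ _
      exact hpq n
    · simp
    · intro t _ hiff
      simp only [Set.mem_compl_iff]
      exact not_congr hiff
    · intro sfam _ hiff
      simp only [Set.mem_iUnion]
      exact exists_congr hiff
  have hpFmem : p ∈ F := hpF
  have hqFmem : q ∉ F := hqF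
  exact hqFmem ((agree F hFg).mp hpFmem)
end

section
/- The Baire space ℕ → ℕ is a topological retract of the space C(ℕ → ℕ, Bool) of continuous functions from the Baire space to the discrete two-point space, endowed with the compact-open topology: there exist continuous maps s : (ℕ → ℕ) → C(ℕ → ℕ, Bool) and r : C(ℕ → ℕ, Bool) → (ℕ → ℕ) such that r ∘ s is the identity on ℕ → ℕ. -/
open Topology

/-!
A point `x` of the Baire space is sent to the clopen set of those `y` with
`y 1 = ⋯ = y (x (y 0)) = 1`. The probe `(n, 1, …, 1, 0, 0, …)` with `k` ones lies in it iff
`x n ≤ k`, so `x n` is recovered as the least such `k`. For fixed `n` the probes converge, so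
with their limit they form a compact set, and in the compact-open topology the restriction of
a `Bool`-valued map to a compact set is a locally constant function of the map; this makes the
recovery continuous.
-/

theorem continuous_eval_of_discreteTopology {ι α : Type*} [TopologicalSpace ι] [DiscreteTopology ι]
    [TopologicalSpace α] : Continuous fun p : (ι → α) × ι => p.1 p.2 :=
  continuous_prod_of_discrete_right.2 continuous_apply

namespace ContinuousMap

variable {X Y : Type*} [TopologicalSpace X] [TopologicalSpace Y] [DiscreteTopology Y] [Finite Y]

theorem isLocallyConstant_restrict {K : Set X} (hK : IsCompact K) :
    IsLocallyConstant fun f : C(X, Y) => K.domRestrict f := by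
  refine (IsLocallyConstant.iff_exists_open _).2 fun f =>
    ⟨⋂ y, {g | Set.MapsTo g (K ∩ f ⁻¹' {y}) {y}},
    isOpen_iInter_of_finite fun y => isOpen_setOfPred_mapsTo
      (hK.inter_right ((isClosed_discrete _).preimage f.continuous)) (isOpen_discrete _),
    Set.mem_iInter.2 fun y x hx => hx.2, fun g hg => ?_⟩
  funext ⟨x, hx⟩
  exact Set.mem_iInter.1 hg (f x) ⟨hx, rfl⟩

theorem isLocallyConstant_comp_of_tendsto {u : ℕ → X} {a : X}
    (hu : Filter.Tendsto u Filter.atTop (𝓝 a)) : IsLocallyConstant fun f : C(X, Y) => f ∘ u :=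
  (isLocallyConstant_restrict hu.isCompact_insert_range).comp
    fun g k => g ⟨u k, Set.mem_insert_of_mem _ (Set.mem_range_self k)⟩

end ContinuousMap

theorem continuous_decide_forall_lt_succ_eq_one :
    Continuous fun p : ℕ × (ℕ → ℕ) => decide (∀ i < p.1, p.2 (i + 1) = 1) := by
  refine continuous_prod_of_discrete_left.2 fun m => ?_
  have h : (fun y : ℕ → ℕ => decide (∀ i < m, y (i + 1) = 1)) =
      (fun v : Fin m → ℕ => decide (∀ i, v i = 1)) ∘ fun y i => y (i + 1) := by
    funext y
    simp [Fin.forall_iff]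
  rw [h]
  exact continuous_of_discreteTopology.comp (continuous_pi fun i => continuous_apply _)

namespace BaireSpace

def clopenCode (p : (ℕ → ℕ) × (ℕ → ℕ)) : Bool := decide (∀ i < p.1 (p.2 0), p.2 (i + 1) = 1)

theorem continuous_clopenCode : Continuous clopenCode :=
  continuous_decide_forall_lt_succ_eq_one.comp
    ((continuous_eval_of_discreteTopology.comp
      (continuous_fst.prodMk ((continuous_apply 0).comp continuous_snd))).prodMk continuous_snd)

noncomputable def toClopen : (ℕ → ℕ) → C(ℕ → ℕ, Bool) :=
  ContinuousMap.curry ⟨clopenCode, continuous_clopenCode⟩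

theorem continuous_toClopen : Continuous toClopen :=
  (ContinuousMap.curry ⟨clopenCode, continuous_clopenCode⟩).continuous

def probe (n k : ℕ) : ℕ → ℕ := fun i => if i = 0 then n else if i ≤ k then 1 else 0

theorem tendsto_probe (n : ℕ) :
    Filter.Tendsto (probe n) Filter.atTop (𝓝 fun i => if i = 0 then n else 1) := by
  refine tendsto_pi_nhds.2 fun i => tendsto_const_nhds.congr' ?_
  filter_upwards [Filter.eventually_ge_atTop i] with k hk
  simp [probe, hk]

theorem toClopen_probe (x : ℕ → ℕ) (n k : ℕ) : toClopen x (probe n k) = decide (x n ≤ k) := by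
  simpa [toClopen, clopenCode, probe] using forall_lt_iff_le

noncomputable def ofClopen (f : C(ℕ → ℕ, Bool)) (n : ℕ) : ℕ := sInf {k | f (probe n k) = true}

theorem continuous_ofClopen : Continuous ofClopen :=
  continuous_pi fun n => ((ContinuousMap.isLocallyConstant_comp_of_tendsto (tendsto_probe n)).comp
    fun v : ℕ → Bool => sInf {k | v k = true}).continuous

theorem ofClopen_comp_toClopen : ofClopen ∘ toClopen = id := by
  funext x n
  simp only [Function.comp_apply, ofClopen, toClopen_probe, decide_eq_true_eq, id_eq]
  exact csInf_Ici

end BaireSpace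

/-- The Baire space `ℕ → ℕ` is a topological retract of the space `C(ℕ → ℕ, Bool)` of
continuous maps to the discrete two-point space, with the compact-open topology. -/
theorem stmt15 :
    ∃ (s : (ℕ → ℕ) → C(ℕ → ℕ, Bool)) (r : C(ℕ → ℕ, Bool) → (ℕ → ℕ)),
      Continuous s ∧ Continuous r ∧ r ∘ s = id :=
  ⟨BaireSpace.toClopen, BaireSpace.ofClopen, BaireSpace.continuous_toClopen,
    BaireSpace.continuous_ofClopen, BaireSpace.ofClopen_comp_toClopen⟩
end
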